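/- arXiv:2404.09348 — 2 statements merged into one kernel-verified Lean document; each statement's English description precedes it below -/
import Mathlib

section
/- Let D = {(t,q) ∈ ℝ² : Σ_n b_n^q·a_n^t < ∞} where a_n, b_n > 0 satisfy a_n^{-α}e^γ ≤ b_n ≤ a_n^{-α}e^β for some α > 0 and β, γ ∈ ℝ. Suppose also that θ := inf{t : Σ_n a_n^t < ∞} satisfies Σ_n a_n^θ = ∞ (cofinite regularity). Then D is an open subset of ℝ². -/
open Filter Set Real

lemma freq_mem_atTop_of_infinite {A : Set ℕ} (h : A.Infinite) :
    ∃ᶠ n in atTop, n ∈ A := by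
  rw [← Nat.cofinite_eq_atTop, Filter.frequently_cofinite_iff_infinite]
  exact h

lemma not_summable_of_freq_one_le {f : ℕ → ℝ} (h : ∃ᶠ n in atTop, (1 : ℝ) ≤ f n) :
    ¬ Summable f := by
  intro hs
  have h0 := hs.tendsto_atTop_zero
  have hev : ∀ᶠ n in atTop, f n < 1 := h0.eventually (eventually_lt_nhds one_pos)
  obtain ⟨n, h1, h2⟩ := (h.and_eventually hev).exists
  linarith

theorem manhattan_region_open (a b : ℕ → ℝ) (ha : ∀ n, 0 < a n) (hb : ∀ n, 0 < b n)
    (α β γ : ℝ) (hα : 0 < α)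
    (hcomp : ∀ n, a n ^ (-α) * Real.exp γ ≤ b n ∧ b n ≤ a n ^ (-α) * Real.exp β)
    (θ : ℝ) (hθ : IsGLB {t : ℝ | Summable (fun n => a n ^ t)} θ)
    (hreg : ¬ Summable (fun n => a n ^ θ)) :
    IsOpen {p : ℝ × ℝ | Summable (fun n => b n ^ p.2 * a n ^ p.1)} := by
  set S : Set ℝ := {t : ℝ | Summable (fun n => a n ^ t)} with hSdef
  -- S is nonempty
  have hSne : S.Nonempty := by
    by_contra h
    rw [Set.not_nonempty_iff_eq_empty] at h
    have h1 : (θ + 1) ∈ lowerBounds S := by simp [h]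
    linarith [hθ.2 h1]
  -- the set of indices with a n > 1 is finite
  have hA : {n : ℕ | 1 < a n}.Finite := by
    by_contra hinf
    obtain ⟨u, hu⟩ := hSne
    have huneg : u < 0 := by
      by_contra hpos
      push_neg at hpos
      refine not_summable_of_freq_one_le ?_ hu
      exact (freq_mem_atTop_of_infinite hinf).mono fun n hn =>
        Real.one_le_rpow hn.le hpos
    have hAc : {n : ℕ | a n ≤ 1}.Finite := by
      by_contra hinf2
      refine not_summable_of_freq_one_le ?_ hu
      exact (freq_mem_atTop_of_infinite hinf2).mono fun n hn =>
        Real.one_le_rpow_of_pos_of_le_one_of_nonpos (ha n) hn huneg.le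
    -- then arbitrarily negative exponents are summable, contradicting the lower bound θ
    set w : ℝ := min u θ - 1 with hw
    have hwS : w ∈ S := by
      have hsum : Summable (fun n => a n ^ u +
          Set.indicator {n : ℕ | a n ≤ 1} (fun n => a n ^ w) n) := by
        refine hu.add (summable_of_finite_support ?_)
        exact hAc.subset (Function.support_subset_iff'.mpr fun n hn =>
          Set.indicator_of_notMem hn _)
      refine Summable.of_nonneg_of_le (fun n => (Real.rpow_nonneg (ha n).le _))
        (fun n => ?_) hsum
      by_cases hn : a n ≤ 1
      · have : Set.indicator {n : ℕ | a n ≤ 1} (fun n => a n ^ w) n = a n ^ w :=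
          Set.indicator_of_mem (show n ∈ {n : ℕ | a n ≤ 1} from hn) _
        rw [this]
        have := Real.rpow_nonneg (ha n).le u
        linarith
      · have h1 : Set.indicator {n : ℕ | a n ≤ 1} (fun n => a n ^ w) n = 0 :=
          Set.indicator_of_notMem (show n ∉ {n : ℕ | a n ≤ 1} from hn) _
        rw [h1, add_zero]
        push_neg at hn
        refine Real.rpow_le_rpow_of_exponent_le hn.le ?_
        have := min_le_left u θ
        linarith
    have := hθ.1 hwS
    have := min_le_right u θ
    linarith [hθ.1 hwS]
  -- S is upward closed
  have hup : ∀ u ∈ S, ∀ t : ℝ, u ≤ t → t ∈ S := by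
    intro u hu t hut
    have hsum : Summable (fun n => a n ^ u +
        Set.indicator {n : ℕ | 1 < a n} (fun n => a n ^ t) n) := by
      refine hu.add (summable_of_finite_support ?_)
      exact hA.subset (Function.support_subset_iff'.mpr fun n hn =>
        Set.indicator_of_notMem hn _)
    refine Summable.of_nonneg_of_le (fun n => (Real.rpow_nonneg (ha n).le _))
      (fun n => ?_) hsum
    by_cases hn : 1 < a n
    · have : Set.indicator {n : ℕ | 1 < a n} (fun n => a n ^ t) n = a n ^ t :=
        Set.indicator_of_mem (show n ∈ {n : ℕ | 1 < a n} from hn) _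
      rw [this]
      have := Real.rpow_nonneg (ha n).le u
      linarith
    · have h1 : Set.indicator {n : ℕ | 1 < a n} (fun n => a n ^ t) n = 0 :=
        Set.indicator_of_notMem (show n ∉ {n : ℕ | 1 < a n} from hn) _
      rw [h1, add_zero]
      push_neg at hn
      exact Real.rpow_le_rpow_of_exponent_ge (ha n) hn hut
  -- S = Ioi θ
  have hSIoi : S = Set.Ioi θ := by
    ext t
    constructor
    · intro ht
      have h1 : θ ≤ t := hθ.1 ht
      rcases h1.lt_or_eq with h | h
      · exact h
      · exact absurd (h ▸ ht) hreg
    · intro ht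
      have h1 : t ∉ lowerBounds S := fun h => absurd (hθ.2 h) (not_le.2 ht)
      simp only [lowerBounds, Set.mem_setOf_eq, not_forall] at h1
      obtain ⟨u, hu, hut⟩ := h1
      push_neg at hut
      exact hup u hu t hut.le
  -- The key pointwise identity and comparison
  have hkey : ∀ p : ℝ × ℝ,
      (Summable (fun n => b n ^ p.2 * a n ^ p.1) ↔
        Summable (fun n => a n ^ (p.1 - α * p.2))) := by
    rintro ⟨t, q⟩
    simp only
    set c : ℕ → ℝ := fun n => b n * a n ^ α with hc
    have hcpos : ∀ n, 0 < c n := fun n =>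
      mul_pos (hb n) (Real.rpow_pos_of_pos (ha n) α)
    have hcl : ∀ n, Real.exp γ ≤ c n := by
      intro n
      have h := (hcomp n).1
      have hpow : (0:ℝ) < a n ^ α := Real.rpow_pos_of_pos (ha n) α
      have h2 := mul_le_mul_of_nonneg_right h hpow.le
      calc Real.exp γ = a n ^ (-α) * Real.exp γ * a n ^ α := by
              rw [mul_comm (a n ^ (-α)), mul_assoc, ← Real.rpow_add (ha n)]
              simp
        _ ≤ b n * a n ^ α := h2
    have hcu : ∀ n, c n ≤ Real.exp β := by
      intro n
      have h := (hcomp n).2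
      have hpow : (0:ℝ) < a n ^ α := Real.rpow_pos_of_pos (ha n) α
      have h2 := mul_le_mul_of_nonneg_right h hpow.le
      calc c n ≤ a n ^ (-α) * Real.exp β * a n ^ α := h2
        _ = Real.exp β := by
              rw [mul_comm (a n ^ (-α)), mul_assoc, ← Real.rpow_add (ha n)]
              simp
    -- pointwise identity
    have heq : ∀ n, b n ^ q * a n ^ t = c n ^ q * a n ^ (t - α * q) := by
      intro n
      have h1 : c n ^ q = b n ^ q * a n ^ (α * q) := by
        rw [hc]
        rw [Real.mul_rpow (hb n).le (Real.rpow_nonneg (ha n).le α),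
          ← Real.rpow_mul (ha n).le]
      rw [h1, Real.rpow_sub (ha n)]
      have hne : a n ^ (α * q) ≠ 0 := (Real.rpow_pos_of_pos (ha n) _).ne'
      field_simp
    -- bounds on c n ^ q
    set m : ℝ := Real.exp (min (γ * q) (β * q)) with hm
    set M : ℝ := Real.exp (max (γ * q) (β * q)) with hM
    have hmpos : 0 < m := Real.exp_pos _
    have hbounds : ∀ n, m ≤ c n ^ q ∧ c n ^ q ≤ M := by
      intro n
      rcases le_or_gt 0 q with hq | hq
      · constructor
        · calc m ≤ Real.exp (γ * q) := Real.exp_le_exp.2 (min_le_left _ _)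
            _ = Real.exp γ ^ q := Real.exp_mul γ q
            _ ≤ c n ^ q := Real.rpow_le_rpow (Real.exp_pos γ).le (hcl n) hq
        · calc c n ^ q ≤ Real.exp β ^ q :=
                Real.rpow_le_rpow (hcpos n).le (hcu n) hq
            _ = Real.exp (β * q) := (Real.exp_mul β q).symm
            _ ≤ M := Real.exp_le_exp.2 (le_max_right _ _)
      · constructor
        · calc m ≤ Real.exp (β * q) := Real.exp_le_exp.2 (min_le_right _ _)
            _ = Real.exp β ^ q := Real.exp_mul β q
            _ ≤ c n ^ q := Real.rpow_le_rpow_of_nonpos (hcpos n) (hcu n) hq.le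
        · calc c n ^ q ≤ Real.exp γ ^ q :=
                Real.rpow_le_rpow_of_nonpos (Real.exp_pos γ) (hcl n) hq.le
            _ = Real.exp (γ * q) := (Real.exp_mul γ q).symm
            _ ≤ M := Real.exp_le_exp.2 (le_max_left _ _)
    rw [summable_congr heq]
    constructor
    · intro h
      have h2 := h.mul_left m⁻¹
      refine Summable.of_nonneg_of_le (fun n => Real.rpow_nonneg (ha n).le _)
        (fun n => ?_) h2
      have h3 : m * a n ^ (t - α * q) ≤ c n ^ q * a n ^ (t - α * q) :=
        mul_le_mul_of_nonneg_right (hbounds n).1 (Real.rpow_nonneg (ha n).le _)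
      calc a n ^ (t - α * q) = m⁻¹ * (m * a n ^ (t - α * q)) := by
            field_simp
        _ ≤ m⁻¹ * (c n ^ q * a n ^ (t - α * q)) :=
            mul_le_mul_of_nonneg_left h3 (inv_nonneg.2 hmpos.le)
    · intro h
      refine Summable.of_nonneg_of_le
        (fun n => mul_nonneg (Real.rpow_nonneg (hcpos n).le _)
          (Real.rpow_nonneg (ha n).le _))
        (fun n => mul_le_mul_of_nonneg_right (hbounds n).2
          (Real.rpow_nonneg (ha n).le _))
        (h.mul_left M)
  -- conclusion
  have hset : {p : ℝ × ℝ | Summable (fun n => b n ^ p.2 * a n ^ p.1)}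
      = {p : ℝ × ℝ | θ < p.1 - α * p.2} := by
    ext p
    simp only [Set.mem_setOf_eq]
    rw [hkey p]
    have : Summable (fun n => a n ^ (p.1 - α * p.2)) ↔ (p.1 - α * p.2) ∈ S :=
      Iff.rfl
    rw [this, hSIoi]
    exact Iff.rfl
  rw [hset]
  exact isOpen_lt continuous_const ((continuous_fst).sub (continuous_const.mul continuous_snd))
end

section
/- For the dyadic Lüroth system, define T(q) = P(−q) − qξ where P(−q) = log(2^q/(1−2^q)), i.e. T(q) = log(2^q) − log(1 − 2^q) − qξ for q < 0, and let ξ > log 2. Then T attains its unique minimum at q* = log₂(1 − (log 2)/ξ), T''(q) = 2^q(log 2)²/(1−2^q)² > 0, and the minimum value divided by ξ gives the Lyapunov spectrum t(ξ) = (1/ξ)·log(ξ/log 2 − 1) − log₂(1 − (log 2)/ξ). -/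
theorem luroth_lyapunov_spectrum (ξ : ℝ) (hξ : Real.log 2 < ξ) :
    let T : ℝ → ℝ := fun q => Real.log ((2 : ℝ) ^ q) - Real.log (1 - (2 : ℝ) ^ q) - q * ξ
    let qstar : ℝ := Real.logb 2 (1 - Real.log 2 / ξ)
    qstar < 0 ∧
    (∀ q < (0 : ℝ), T qstar ≤ T q) ∧
    (∀ q < (0 : ℝ), T q = T qstar → q = qstar) ∧
    (∀ q < (0 : ℝ), HasDerivAt T (Real.log 2 / (1 - (2 : ℝ) ^ q) - ξ) q) ∧
    (∀ q < (0 : ℝ), HasDerivAt (fun s => Real.log 2 / (1 - (2 : ℝ) ^ s) - ξ)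
        ((2 : ℝ) ^ q * (Real.log 2) ^ 2 / (1 - (2 : ℝ) ^ q) ^ 2) q ∧
      0 < (2 : ℝ) ^ q * (Real.log 2) ^ 2 / (1 - (2 : ℝ) ^ q) ^ 2) ∧
    (1 / ξ) * T qstar =
      (1 / ξ) * Real.log (ξ / Real.log 2 - 1) - Real.logb 2 (1 - Real.log 2 / ξ) := by
  intro T qstar
  have hL : (0 : ℝ) < Real.log 2 := Real.log_pos (by norm_num)
  have hξ0 : (0 : ℝ) < ξ := hL.trans hξ
  have hy0 : (0 : ℝ) < 1 - Real.log 2 / ξ := by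
    have : Real.log 2 / ξ < 1 := (div_lt_one hξ0).mpr hξ
    linarith
  have hy1 : 1 - Real.log 2 / ξ < 1 := by
    have : 0 < Real.log 2 / ξ := div_pos hL hξ0
    linarith
  have h2q : (2 : ℝ) ^ qstar = 1 - Real.log 2 / ξ :=
    Real.rpow_logb (by norm_num) (by norm_num) hy0
  have hqstar : qstar < 0 := Real.logb_neg (by norm_num) hy0 hy1
  -- basic facts about 2^q for q < 0
  have hpow_pos : ∀ q : ℝ, (0 : ℝ) < (2 : ℝ) ^ q := fun q => Real.rpow_pos_of_pos (by norm_num) q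
  have hpow_lt1 : ∀ q < (0 : ℝ), (2 : ℝ) ^ q < 1 := fun q hq =>
    Real.rpow_lt_one_of_one_lt_of_neg (by norm_num) hq
  have hne : ∀ q < (0 : ℝ), 1 - (2 : ℝ) ^ q ≠ 0 := fun q hq => by
    have := hpow_lt1 q hq; linarith
  have hposd : ∀ q < (0 : ℝ), (0 : ℝ) < 1 - (2 : ℝ) ^ q := fun q hq => by
    have := hpow_lt1 q hq; linarith
  -- derivative of T
  have hT' : ∀ q < (0 : ℝ), HasDerivAt T (Real.log 2 / (1 - (2 : ℝ) ^ q) - ξ) q := by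
    intro q hq
    have h2 : HasDerivAt (fun s : ℝ => (2 : ℝ) ^ s) ((2 : ℝ) ^ q * Real.log 2) q :=
      (Real.hasStrictDerivAt_const_rpow (by norm_num) q).hasDerivAt
    have hlog1 : HasDerivAt (fun s : ℝ => Real.log ((2 : ℝ) ^ s)) (Real.log 2) q := by
      have : HasDerivAt (fun s : ℝ => s * Real.log 2) (Real.log 2) q := by
        simpa using (hasDerivAt_id q).mul_const (Real.log 2)
      refine this.congr_of_eventuallyEq ?_
      filter_upwards with s
      rw [Real.log_rpow (by norm_num)]
    have hlog2 : HasDerivAt (fun s : ℝ => Real.log (1 - (2 : ℝ) ^ s))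
        (-((2 : ℝ) ^ q * Real.log 2) / (1 - (2 : ℝ) ^ q)) q := by
      have hu : HasDerivAt (fun s : ℝ => 1 - (2 : ℝ) ^ s) (-((2 : ℝ) ^ q * Real.log 2)) q := by
        have h3 := (hasDerivAt_const q (1 : ℝ)).sub h2
        rw [zero_sub] at h3
        exact h3
      exact hu.log (hne q hq)
    have hlin : HasDerivAt (fun s : ℝ => s * ξ) ξ q := by
      simpa using (hasDerivAt_id q).mul_const ξ
    have this : HasDerivAt (fun s : ℝ => Real.log ((2 : ℝ) ^ s) - Real.log (1 - (2 : ℝ) ^ s) - s * ξ) _ q := (hlog1.sub hlog2).sub hlin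
    convert this using 1
    have h1 := hne q hq
    rw [eq_comm, sub_left_inj, neg_div, sub_neg_eq_add, eq_div_iff h1, add_mul, div_mul_cancel₀ _ h1]
    ring
  -- second derivative
  have hT'' : ∀ q < (0 : ℝ), HasDerivAt (fun s => Real.log 2 / (1 - (2 : ℝ) ^ s) - ξ)
      ((2 : ℝ) ^ q * (Real.log 2) ^ 2 / (1 - (2 : ℝ) ^ q) ^ 2) q := by
    intro q hq
    have h2 : HasDerivAt (fun s : ℝ => (2 : ℝ) ^ s) ((2 : ℝ) ^ q * Real.log 2) q :=
      (Real.hasStrictDerivAt_const_rpow (by norm_num) q).hasDerivAt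
    have hu : HasDerivAt (fun s : ℝ => 1 - (2 : ℝ) ^ s) (-((2 : ℝ) ^ q * Real.log 2)) q := by
      have h3 := (hasDerivAt_const q (1 : ℝ)).sub h2
      rw [zero_sub] at h3
      exact h3
    have hd : HasDerivAt (fun s : ℝ => Real.log 2 / (1 - (2 : ℝ) ^ s) - ξ) _ q := ((hasDerivAt_const q (Real.log 2)).div hu (hne q hq)).sub_const ξ
    convert hd using 1
    have h1 := hne q hq
    ring
  -- sign of T' : T' q < 0 for q < qstar, T' q > 0 for qstar < q < 0
  have hsign : ∀ q < (0 : ℝ),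
      (q < qstar → Real.log 2 / (1 - (2 : ℝ) ^ q) - ξ < 0) ∧
      (qstar < q → 0 < Real.log 2 / (1 - (2 : ℝ) ^ q) - ξ) := by
    intro q hq
    have hd := hposd q hq
    constructor
    · intro hlt
      have hpow : (2 : ℝ) ^ q < (2 : ℝ) ^ qstar :=
        Real.rpow_lt_rpow_left_iff (by norm_num : (1:ℝ) < 2) |>.mpr hlt
      rw [h2q] at hpow
      rw [sub_neg, div_lt_iff₀ hd]
      have : Real.log 2 / ξ < 1 - (2 : ℝ) ^ q := by linarith
      calc Real.log 2 = (Real.log 2 / ξ) * ξ := by field_simp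
        _ < (1 - (2 : ℝ) ^ q) * ξ := by
            exact mul_lt_mul_of_pos_right this hξ0
        _ = ξ * (1 - (2 : ℝ) ^ q) := by ring
    · intro hlt
      have hpow : (2 : ℝ) ^ qstar < (2 : ℝ) ^ q :=
        Real.rpow_lt_rpow_left_iff (by norm_num : (1:ℝ) < 2) |>.mpr hlt
      rw [h2q] at hpow
      rw [sub_pos, lt_div_iff₀ hd]
      have : 1 - (2 : ℝ) ^ q < Real.log 2 / ξ := by linarith
      calc ξ * (1 - (2 : ℝ) ^ q) = (1 - (2 : ℝ) ^ q) * ξ := by ring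
        _ < (Real.log 2 / ξ) * ξ := mul_lt_mul_of_pos_right this hξ0
        _ = Real.log 2 := by field_simp
  -- strict monotonicity pieces
  have hmin : ∀ q < (0 : ℝ), q ≠ qstar → T qstar < T q := by
    intro q hq hne'
    rcases lt_or_gt_of_ne hne' with h | h
    · -- q < qstar : T strictly anti on [q, qstar]
      have hanti : StrictAntiOn T (Set.Icc q qstar) := by
        apply strictAntiOn_of_deriv_neg (convex_Icc q qstar)
        · intro x hx
          have hx0 : x < 0 := lt_of_le_of_lt hx.2 hqstar
          exact (hT' x hx0).continuousAt.continuousWithinAt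
        · intro x hx
          rw [interior_Icc] at hx
          have hx0 : x < 0 := hx.2.trans hqstar
          rw [(hT' x hx0).deriv]
          exact (hsign x hx0).1 hx.2
      exact hanti (Set.left_mem_Icc.mpr h.le) (Set.right_mem_Icc.mpr h.le) h
    · -- qstar < q : T strictly mono on [qstar, q]
      have hmono : StrictMonoOn T (Set.Icc qstar q) := by
        apply strictMonoOn_of_deriv_pos (convex_Icc qstar q)
        · intro x hx
          have hx0 : x < 0 := lt_of_le_of_lt hx.2 hq
          exact (hT' x hx0).continuousAt.continuousWithinAt
        · intro x hx
          rw [interior_Icc] at hx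
          have hx0 : x < 0 := hx.2.trans hq
          rw [(hT' x hx0).deriv]
          exact (hsign x hx0).2 hx.1
      exact hmono (Set.left_mem_Icc.mpr h.le) (Set.right_mem_Icc.mpr h.le) h
  refine ⟨hqstar, ?_, ?_, hT', ?_, ?_⟩
  · intro q hq
    by_cases h : q = qstar
    · rw [h]
    · exact (hmin q hq h).le
  · intro q hq heq
    by_contra h
    exact absurd heq (ne_of_gt (hmin q hq h))
  · intro q hq
    refine ⟨hT'' q hq, ?_⟩
    apply div_pos
    · exact mul_pos (hpow_pos q) (pow_pos hL 2)
    · exact pow_pos (hposd q hq) 2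
  · -- value at qstar
    have hTq : T qstar = qstar * Real.log 2 - Real.log (Real.log 2 / ξ) - qstar * ξ := by
      show Real.log ((2:ℝ) ^ qstar) - Real.log (1 - (2:ℝ) ^ qstar) - qstar * ξ = _
      rw [Real.log_rpow (by norm_num), h2q]
      congr 2
      ring_nf
    have hlog : Real.log (ξ / Real.log 2 - 1) =
        qstar * Real.log 2 - Real.log (Real.log 2 / ξ) := by
      have h1 : Real.log ((2:ℝ) ^ qstar) = qstar * Real.log 2 := Real.log_rpow (by norm_num) _
      rw [h2q] at h1
      have h2 : ξ / Real.log 2 - 1 = (1 - Real.log 2 / ξ) / (Real.log 2 / ξ) := by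
        field_simp
      rw [h2, Real.log_div (by linarith) (ne_of_gt (div_pos hL hξ0)), h1]
    rw [hTq, hlog]
    show (1 / ξ) * (qstar * Real.log 2 - Real.log (Real.log 2 / ξ) - qstar * ξ)
        = (1 / ξ) * (qstar * Real.log 2 - Real.log (Real.log 2 / ξ)) - qstar
    field_simp
end
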